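/- arXiv:2508.03552 — 5 statements merged into one kernel-verified Lean document; each statement's English description precedes it below -/
import Mathlib

section
/- Let I be a subset of {1,…,n} with |I| = k. Then there exists a nonzero polynomial f in the twisted polynomial space V_{(k,1,k-1,η)} such that f(α_i) = 0 for every i ∈ I if and only if η·∑_{i∈I} α_i = -1. -/
/-! A nonzero polynomial `f` of degree at most `k` vanishing at the `k` distinct points `α i`,
`i ∈ I`, equals `C c * nodal I α` with `c ≠ 0`, where `nodal I α = ∏ i ∈ I, (X - C (α i))` has
coefficients `1` and `-∑ i ∈ I, α i` in degrees `k` and `k - 1`. The twist condition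
`f.coeff k = η * f.coeff (k - 1)` thus becomes `c * (1 + η * ∑ i ∈ I, α i) = 0`. -/

open Polynomial

/-- The set of `(k,1,ℓ,η)`-twisted polynomials:
`{ ∑_{i=0}^{k-1} a_i x^i + η a_ℓ x^k : a_i ∈ F }`. -/
def twistedSpace {F : Type*} [Field F] (k ℓ : ℕ) (hℓ : ℓ < k) (η : F) :
    Set (Polynomial F) :=
  {f | ∃ a : Fin k → F,
    f = (∑ i : Fin k, Polynomial.C (a i) * Polynomial.X ^ (i : ℕ))
          + Polynomial.C (η * a ⟨ℓ, hℓ⟩) * Polynomial.X ^ k}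

open Finset Lagrange

theorem Polynomial.coeff_sum_fin_C_mul_X_pow {R : Type*} [Semiring R] {k : ℕ} (a : Fin k → R)
    (j : ℕ) :
    (∑ i : Fin k, C (a i) * X ^ (i : ℕ)).coeff j = if h : j < k then a ⟨j, h⟩ else 0 := by
  simp only [finsetSum_coeff, coeff_C_mul, coeff_X_pow, mul_ite, mul_one, mul_zero]
  split_ifs with h
  · rw [Finset.sum_eq_single ⟨j, h⟩ (fun i _ hi => if_neg fun hj => hi (Fin.ext hj.symm)) (by simp)]
    simp
  · exact Finset.sum_eq_zero fun i _ => if_neg fun hj : j = i => h (hj ▸ i.2)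

theorem mem_twistedSpace_iff {F : Type*} [Field F] {k ℓ : ℕ} (hℓ : ℓ < k) (η : F) (f : F[X]) :
    f ∈ twistedSpace k ℓ hℓ η ↔ f.natDegree ≤ k ∧ f.coeff k = η * f.coeff ℓ := by
  constructor
  · rintro ⟨a, rfl⟩
    have hcoeff (j : ℕ) : (∑ i : Fin k, C (a i) * X ^ (i : ℕ) + C (η * a ⟨ℓ, hℓ⟩) * X ^ k).coeff j
        = (if h : j < k then a ⟨j, h⟩ else 0) + if j = k then η * a ⟨ℓ, hℓ⟩ else 0 := by
      rw [coeff_add, coeff_sum_fin_C_mul_X_pow, coeff_C_mul_X_pow]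
    refine ⟨natDegree_le_iff_coeff_eq_zero.2 fun m hm => ?_, ?_⟩
    · rw [hcoeff, dif_neg hm.le.not_gt, if_neg hm.ne', add_zero]
    · rw [hcoeff, hcoeff, dif_neg (lt_irrefl k), if_pos rfl, dif_pos hℓ, if_neg hℓ.ne, zero_add,
        add_zero]
  · rintro ⟨hdeg, hcoeff⟩
    refine ⟨fun i => f.coeff i, ?_⟩
    rw [← hcoeff, Fin.sum_univ_eq_sum_range (fun i => C (f.coeff i) * X ^ i),
      ← sum_range_succ (fun i => C (f.coeff i) * X ^ i)]
    exact f.as_sum_range_C_mul_X_pow' (Nat.lt_succ_of_le hdeg)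

theorem Lagrange.coeff_nodal_card {R ι : Type*} [CommRing R] [Nontrivial R] (s : Finset ι)
    (v : ι → R) : (nodal s v).coeff #s = 1 := by
  simpa [natDegree_nodal] using (nodal_monic (s := s) (v := v)).coeff_natDegree

theorem Lagrange.coeff_nodal_card_sub_one {R ι : Type*} [CommRing R] [Nontrivial R] {s : Finset ι}
    (hs : s.Nonempty) (v : ι → R) : (nodal s v).coeff (#s - 1) = -∑ i ∈ s, v i := by
  rw [← prod_X_sub_C_nextCoeff v, ← nodal_eq, nextCoeff_of_natDegree_pos, natDegree_nodal]
  exact natDegree_nodal (v := v) ▸ hs.card_pos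

theorem Lagrange.eq_C_mul_nodal_of_eval_eq_zero {F ι : Type*} [Field F] {s : Finset ι} {v : ι → F}
    {f : F[X]} (hvs : Set.InjOn v s) (hdeg : f.natDegree ≤ #s)
    (heval : ∀ i ∈ s, f.eval (v i) = 0) : f = C (f.coeff #s) * nodal s v := by
  rw [← sub_eq_zero]
  refine eq_zero_of_degree_lt_of_eval_index_eq_zero s hvs ?_ fun i hi => ?_
  · rw [degree_lt_iff_coeff_zero]
    intro m hm
    rw [coeff_sub, coeff_C_mul]
    rcases hm.eq_or_lt with rfl | hlt
    · rw [coeff_nodal_card, mul_one, sub_self]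
    · rw [coeff_eq_zero_of_natDegree_lt (hdeg.trans_lt hlt),
        coeff_eq_zero_of_natDegree_lt ((natDegree_nodal (s := s) (v := v)).trans_lt hlt),
        mul_zero, sub_zero]
  · rw [eval_sub, eval_C_mul, heval i hi, eval_nodal_at_node hi, mul_zero, sub_zero]

theorem C_mul_nodal_mem_twistedSpace_iff {F ι : Type*} [Field F] {s : Finset ι} (hs : 1 ≤ #s)
    (v : ι → F) (c η : F) :
    C c * nodal s v ∈ twistedSpace #s (#s - 1) (Nat.sub_lt hs Nat.one_pos) η ↔
      c = 0 ∨ η * ∑ i ∈ s, v i = -1 := by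
  rw [mem_twistedSpace_iff, coeff_C_mul, coeff_C_mul, coeff_nodal_card,
    coeff_nodal_card_sub_one (card_pos.1 hs)]
  have hdeg : (C c * nodal s v).natDegree ≤ #s := (natDegree_C_mul_le _ _).trans natDegree_nodal.le
  rw [and_iff_right hdeg, ← sub_eq_zero, ← add_eq_zero_iff_eq_neg, ← mul_eq_zero]
  constructor <;> intro h <;> linear_combination h

theorem twisted_vanishing_iff_general {F : Type*} [Field F] {n k : ℕ}
    (hk : 1 ≤ k)
    (α : Fin n → F) (hα : Function.Injective α) (η : F)
    (I : Finset (Fin n)) (hI : I.card = k) :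
    (∃ f ∈ twistedSpace k (k - 1) (Nat.sub_lt hk Nat.one_pos) η,
        f ≠ 0 ∧ ∀ i ∈ I, f.eval (α i) = 0)
      ↔ η * ∑ i ∈ I, α i = -1 := by
  subst hI
  constructor
  · rintro ⟨f, hf, hf0, hvan⟩
    have hf_eq := eq_C_mul_nodal_of_eval_eq_zero hα.injOn ((mem_twistedSpace_iff _ η f).1 hf).1 hvan
    rw [hf_eq, C_mul_nodal_mem_twistedSpace_iff hk] at hf
    exact hf.resolve_left fun hc => hf0 (by rw [hf_eq, hc, C_0, zero_mul])
  · intro h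
    refine ⟨nodal I α, ?_, nodal_ne_zero, fun i hi => eval_nodal_at_node hi⟩
    simpa using (C_mul_nodal_mem_twistedSpace_iff hk α 1 η).2 (Or.inr h)

/-- There exists a nonzero twisted polynomial in `V_{(k,1,k-1,η)}` vanishing on
`{α_i : i ∈ I}` (with `|I| = k`) iff `η ∑_{i ∈ I} α_i = -1`. -/
theorem twisted_vanishing_iff {F : Type*} [Field F] {n k : ℕ}
    (hk : 1 ≤ k) (hkn : k < n)
    (α : Fin n → F) (hα : Function.Injective α) (η : F) (hη : η ≠ 0)
    (I : Finset (Fin n)) (hI : I.card = k) :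
    (∃ f ∈ twistedSpace k (k - 1) (Nat.sub_lt hk Nat.one_pos) η,
        f ≠ 0 ∧ ∀ i ∈ I, f.eval (α i) = 0)
      ↔ η * ∑ i ∈ I, α i = -1 :=
  twisted_vanishing_iff_general hk α hα η I hI
end

section
/- Suppose n - k is odd. Let f ∈ 𝔽_q[x] with deg f ≤ k, and let y = (y_1,…,y_n) ∈ 𝔽_q^n satisfy |{ j : y_j ≠ f(α_j) }| ≤ (n-k-1)/2. Let g, p ∈ 𝔽_q[x] be polynomials, not both zero, with deg p ≤ (n-k-1)/2 and deg g ≤ (n+k-1)/2, such that g(α_j) = p(α_j)·y_j for every j = 1,…,n. Then g = p·f (in particular p ≠ 0, p divides g, and the quotient g/p equals f). -/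
open Polynomial Finset

/- `g - p f` vanishes at every `αⱼ` where `y` agrees with `f`, and there are more such points than
its degree. -/
theorem Polynomial.eq_mul_of_eval_eq_mul_of_natDegree_add_card_errors_lt {R ι : Type*}
    [CommRing R] [IsDomain R] [DecidableEq R] [Fintype ι] {α : ι → R}
    (hα : Function.Injective α) {f g p : R[X]} {y : ι → R}
    (heq : ∀ j, g.eval (α j) = p.eval (α j) * y j)
    (hcard : max g.natDegree (p * f).natDegree + #{j | y j ≠ f.eval (α j)} < Fintype.card ι) :
    g = p * f := by
  set agree := univ.filter fun j => y j = f.eval (α j)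
  have hsplit : #agree + #{j | y j ≠ f.eval (α j)} = Fintype.card ι :=
    card_filter_add_card_filter_not _
  refine eq_of_natDegree_lt_card_of_eval_eq' g (p * f) (agree.image α) ?_ ?_
  · simp only [mem_image, forall_exists_index, and_imp]
    rintro _ j hj rfl
    rw [heq, eval_mul, (mem_filter.mp hj).2]
  · rw [card_image_of_injective _ hα]
    omega

theorem decoding_mds_odd_general {F : Type*} [Field F] [DecidableEq F] {n k : ℕ}
    (hodd : Odd (n - k))
    (α : Fin n → F) (hα : Function.Injective α)
    (f : Polynomial F) (hf : f.natDegree ≤ k) (y : Fin n → F)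
    (herr : (Finset.univ.filter fun j => y j ≠ f.eval (α j)).card ≤ (n - k - 1) / 2)
    (g p : Polynomial F)
    (hp : p.natDegree ≤ (n - k - 1) / 2) (hg : g.natDegree ≤ (n + k - 1) / 2)
    (heq : ∀ j, g.eval (α j) = p.eval (α j) * y j) :
    g = p * f := by
  obtain ⟨m, hm⟩ := hodd
  have hdeg : max g.natDegree (p * f).natDegree ≤ m + k :=
    max_le (by omega) (natDegree_mul_le.trans (by omega))
  apply eq_mul_of_eval_eq_mul_of_natDegree_add_card_errors_lt hα heq
  rw [Fintype.card_fin]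
  omega

/-- Correctness of the Gaussian-elimination decoding algorithm when `n - k` is odd:
if `y` differs from the evaluation vector of `f` (`deg f ≤ k`) in at most
`(n-k-1)/2` positions, then any not-both-zero solution `(g, p)` of the
interpolation system with `deg p ≤ (n-k-1)/2` and `deg g ≤ (n+k-1)/2`
satisfies `g = p · f`. -/
theorem decoding_mds_odd {F : Type*} [Field F] [DecidableEq F] {n k : ℕ}
    (hk : 1 ≤ k) (hkn : k < n) (hodd : Odd (n - k))
    (α : Fin n → F) (hα : Function.Injective α)
    (f : Polynomial F) (hf : f.natDegree ≤ k) (y : Fin n → F)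
    (herr : (Finset.univ.filter fun j => y j ≠ f.eval (α j)).card ≤ (n - k - 1) / 2)
    (g p : Polynomial F) (hgp : ¬(g = 0 ∧ p = 0))
    (hp : p.natDegree ≤ (n - k - 1) / 2) (hg : g.natDegree ≤ (n + k - 1) / 2)
    (heq : ∀ j, g.eval (α j) = p.eval (α j) * y j) :
    g = p * f :=
  decoding_mds_odd_general hodd α hα f hf y herr g p hp hg heq
end

section
/- Suppose n - k is odd and that η·∑_{i∈I} α_i ≠ -1 for every subset I ⊆ {1,…,n} with |I| = k. Let y ∈ 𝔽_q^n and let f_1, f_2 ∈ V_{(k,1,k-1,η)} be twisted polynomials such that the Hamming distance between (f_i(α_1),…,f_i(α_n)) and y is at most (n-k-1)/2 for i = 1, 2. Then f_1 = f_2; that is, the decoding algorithm correcting up to ⌊(n-k)/2⌋ errors has a unique output. -/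
open Polynomial

/-!
Twisted polynomials have degree at most `k`. Two codewords within `(n - k - 1) / 2` of the same
word are at Hamming distance at most `n - k - 1` from each other, so the two polynomials agree on
at least `k + 1` of the distinct points `α j`, and their difference, of degree at most `k`,
must vanish.
-/

open scoped Finset

theorem card_filter_eq_add_hammingDist {ι : Type*} [Fintype ι] {β : ι → Type*}
    [∀ i, DecidableEq (β i)] (x y : ∀ i, β i) :
    #{i | x i = y i} + hammingDist x y = Fintype.card ι :=
  Finset.card_filter_add_card_filter_not _

namespace Polynomial

theorem eq_of_hammingDist_eval_add_lt {R ι : Type*} [CommRing R] [IsDomain R] [DecidableEq R]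
    [Fintype ι] {v : ι → R} (hv : Function.Injective v) {p q : R[X]} {d : ℕ}
    (hp : p.natDegree ≤ d) (hq : q.natDegree ≤ d)
    (h : hammingDist (fun i => p.eval (v i)) (fun i => q.eval (v i)) + d < Fintype.card ι) :
    p = q := by
  refine eq_of_degree_sub_lt_of_eval_index_eq {i | p.eval (v i) = q.eval (v i)}
    hv.injOn ?_ (fun i hi => (Finset.mem_filter.mp hi).2)
  have hagree : d < #{i | p.eval (v i) = q.eval (v i)} := by
    have := card_filter_eq_add_hammingDist (fun i => p.eval (v i)) (fun i => q.eval (v i))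
    omega
  calc (p - q).degree ≤ d :=
        degree_le_of_natDegree_le ((natDegree_sub_le p q).trans (max_le hp hq))
    _ < _ := by exact_mod_cast hagree

end Polynomial

theorem natDegree_le_of_mem_twistedSpace {F : Type*} [Field F] {k ℓ : ℕ} {hℓ : ℓ < k} {η : F}
    {f : F[X]} (hf : f ∈ twistedSpace k ℓ hℓ η) : f.natDegree ≤ k := by
  obtain ⟨a, rfl⟩ := hf
  refine (natDegree_add_le _ _).trans (max_le ?_ (natDegree_C_mul_X_pow_le _ _))
  exact natDegree_sum_le_of_forall_le _ _ fun i _ =>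
    (natDegree_C_mul_X_pow_le _ _).trans i.isLt.le

theorem decoding_unique_mds_odd_general {F : Type*} [Field F] [DecidableEq F] {n k : ℕ}
    (hk : 1 ≤ k) (hkn : k < n)
    (α : Fin n → F) (hα : Function.Injective α) (η : F)
    (y : Fin n → F)
    (f₁ f₂ : Polynomial F)
    (hf₁ : f₁ ∈ twistedSpace k (k - 1) (Nat.sub_lt hk Nat.one_pos) η)
    (hf₂ : f₂ ∈ twistedSpace k (k - 1) (Nat.sub_lt hk Nat.one_pos) η)
    (hd₁ : hammingDist (fun j => f₁.eval (α j)) y ≤ (n - k - 1) / 2)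
    (hd₂ : hammingDist (fun j => f₂.eval (α j)) y ≤ (n - k - 1) / 2) :
    f₁ = f₂ := by
  refine eq_of_hammingDist_eval_add_lt hα (natDegree_le_of_mem_twistedSpace hf₁)
    (natDegree_le_of_mem_twistedSpace hf₂) ?_
  have := hammingDist_triangle_right (fun j => f₁.eval (α j)) (fun j => f₂.eval (α j)) y
  rw [Fintype.card_fin]
  omega

/-- Uniqueness of decoding up to `⌊(n-k)/2⌋ = (n-k-1)/2` errors for the MDS TGRS
code with `n - k` odd. -/
theorem decoding_unique_mds_odd {F : Type*} [Field F] [DecidableEq F] {n k : ℕ}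
    (hk : 1 ≤ k) (hkn : k < n) (hodd : Odd (n - k))
    (α : Fin n → F) (hα : Function.Injective α) (η : F) (hη : η ≠ 0)
    (hmds : ∀ I : Finset (Fin n), I.card = k → η * ∑ i ∈ I, α i ≠ -1)
    (y : Fin n → F)
    (f₁ f₂ : Polynomial F)
    (hf₁ : f₁ ∈ twistedSpace k (k - 1) (Nat.sub_lt hk Nat.one_pos) η)
    (hf₂ : f₂ ∈ twistedSpace k (k - 1) (Nat.sub_lt hk Nat.one_pos) η)
    (hd₁ : hammingDist (fun j => f₁.eval (α j)) y ≤ (n - k - 1) / 2)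
    (hd₂ : hammingDist (fun j => f₂.eval (α j)) y ≤ (n - k - 1) / 2) :
    f₁ = f₂ :=
  decoding_unique_mds_odd_general hk hkn α hα η y f₁ f₂ hf₁ hf₂ hd₁ hd₂
end

section
/- Let f ∈ 𝔽_q[x] with deg f ≤ k, and let y = (y_1,…,y_n) ∈ 𝔽_q^n satisfy |{ j : y_j ≠ f(α_j) }| ≤ ⌊(n-k-1)/2⌋. Let g, p ∈ 𝔽_q[x] be polynomials, not both zero, with deg p ≤ ⌊(n-k-1)/2⌋ and deg g ≤ k + ⌈(n-k-1)/2⌉, such that g(α_j) = p(α_j)·y_j for every j = 1,…,n. Then g = p·f (in particular p ≠ 0, p divides g, and the quotient g/p equals f). -/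
/-!
At every position where `y` agrees with `f`, the interpolation equation says that `g - p * f`
vanishes at `α j`. There are at least `n - ⌊(n-k-1)/2⌋` such positions, which exceeds the
degree bound `k + ⌈(n-k-1)/2⌉` of `g - p * f`, so `g - p * f = 0`.
-/

open Polynomial Finset

theorem Finset.card_sub_card_filter_ne_le_card_filter_eq {ι β : Type*} [Fintype ι]
    [DecidableEq β] (u v : ι → β) :
    Fintype.card ι - #{j | u j ≠ v j} ≤ #{j | u j = v j} := by
  have : #{j | u j = v j} + #{j | u j ≠ v j} = Fintype.card ι :=
    card_filter_add_card_filter_not _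
  omega

theorem Polynomial.eq_mul_of_eval_eq_mul_eval_of_natDegree_lt {F ι : Type*} [Field F]
    {α : ι → F} (s : Finset ι) (hα : Set.InjOn α s) {f g p : F[X]} {y : ι → F}
    (hdeg : (g - p * f).natDegree < #s) (hy : ∀ j ∈ s, y j = f.eval (α j))
    (heq : ∀ j ∈ s, g.eval (α j) = p.eval (α j) * y j) :
    g = p * f :=
  eq_of_degree_sub_lt_of_eval_index_eq s hα
    (degree_le_natDegree.trans_lt (by exact_mod_cast hdeg))
    fun j hj => by rw [eval_mul, heq j hj, hy j hj]

theorem decoding_nmds_general {F : Type*} [Field F] [DecidableEq F] {n k : ℕ}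
    (hkn : k < n)
    (α : Fin n → F) (hα : Function.Injective α)
    (f : Polynomial F) (hf : f.natDegree ≤ k) (y : Fin n → F)
    (herr : (Finset.univ.filter fun j => y j ≠ f.eval (α j)).card ≤ (n - k - 1) / 2)
    (g p : Polynomial F)
    (hp : p.natDegree ≤ (n - k - 1) / 2) (hg : g.natDegree ≤ k + (n - k) / 2)
    (heq : ∀ j, g.eval (α j) = p.eval (α j) * y j) :
    g = p * f := by
  have hagree := card_sub_card_filter_ne_le_card_filter_eq y fun j => f.eval (α j)
  rw [Fintype.card_fin] at hagree
  have hdeg : (g - p * f).natDegree ≤ max (k + (n - k) / 2) ((n - k - 1) / 2 + k) :=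
    natDegree_sub_le_of_le hg (natDegree_mul_le_of_le hp hf)
  refine eq_mul_of_eval_eq_mul_eval_of_natDegree_lt {j | y j = f.eval (α j)} hα.injOn ?_
    (fun j hj => (mem_filter.1 hj).2) fun j _ => heq j
  omega

/-- Correctness of the Gaussian-elimination decoding algorithm for NMDS TGRS codes:
if `y` differs from the evaluation vector of `f` (`deg f ≤ k`) in at most
`⌊(n-k-1)/2⌋` positions, then any not-both-zero solution `(g, p)` of the
interpolation system with `deg p ≤ ⌊(n-k-1)/2⌋` and
`deg g ≤ k + ⌈(n-k-1)/2⌉` (note `⌈(n-k-1)/2⌉ = (n-k)/2` in ℕ since `k < n`)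
satisfies `g = p · f`. -/
theorem decoding_nmds {F : Type*} [Field F] [DecidableEq F] {n k : ℕ}
    (hk : 1 ≤ k) (hkn : k < n)
    (α : Fin n → F) (hα : Function.Injective α)
    (f : Polynomial F) (hf : f.natDegree ≤ k) (y : Fin n → F)
    (herr : (Finset.univ.filter fun j => y j ≠ f.eval (α j)).card ≤ (n - k - 1) / 2)
    (g p : Polynomial F) (hgp : ¬(g = 0 ∧ p = 0))
    (hp : p.natDegree ≤ (n - k - 1) / 2) (hg : g.natDegree ≤ k + (n - k) / 2)
    (heq : ∀ j, g.eval (α j) = p.eval (α j) * y j) :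
    g = p * f :=
  decoding_nmds_general hkn α hα f hf y herr g p hp hg heq
end

section
/- The minimum Hamming distance d of the twisted generalized Reed–Solomon code C_{k,1,ℓ}(α,𝟏,η) satisfies n-k ≤ d ≤ n-k+1; that is, the code is either MDS or almost MDS. -/
open Polynomial

/-- The twisted generalized Reed–Solomon code `C_{k,1,ℓ}(α, 1, η)`. -/
def tgrsCode {F : Type*} [Field F] {n : ℕ} (k ℓ : ℕ) (hℓ : ℓ < k)
    (α : Fin n → F) (η : F) : Set (Fin n → F) :=
  {v | ∃ f ∈ twistedSpace k ℓ hℓ η, ∀ j, v j = f.eval (α j)}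

/-!
A nonzero twisted polynomial has degree at most `k`, so it vanishes at no more than `k` of the
distinct points `α j`: every nonzero codeword has weight at least `n - k`. Since `k < n`, this
also makes the encoder injective, so the code has dimension `k`, and the Singleton argument
(a nonzero codeword vanishing on `k - 1` prescribed coordinates) gives weight at most `n - k + 1`.
-/

open Module Finset

theorem Submodule.exists_ne_zero_hammingNorm_add_finrank_le {F ι : Type*} [Field F]
    [DecidableEq F] [Fintype ι] (C : Submodule F (ι → F)) (hC : 0 < finrank F C) :
    ∃ v ∈ C, v ≠ 0 ∧ hammingNorm v + finrank F C ≤ Fintype.card ι + 1 := by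
  classical
  have hCle : finrank F C ≤ Fintype.card ι := by
    simpa using C.finrank_le
  obtain ⟨s, -, hs⟩ := Finset.exists_subset_card_eq (s := (Finset.univ : Finset ι))
    (n := finrank F C - 1) (by rw [Finset.card_univ]; omega)
  let restrict : C →ₗ[F] (s → F) :=
    (LinearMap.pi fun i : s => LinearMap.proj (i : ι)).comp C.subtype
  have hker : LinearMap.ker restrict ≠ ⊥ :=
    restrict.ker_ne_bot_of_finrank_lt <| by
      rw [finrank_fintype_fun_eq_card, Fintype.card_coe, hs]; omega
  obtain ⟨⟨v, hvC⟩, hv, hv0⟩ := (Submodule.ne_bot_iff _).1 hker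
  have hsupp : hammingNorm v ≤ #sᶜ := by
    refine Finset.card_le_card fun i hi => Finset.mem_compl.2 fun his => ?_
    exact (Finset.mem_filter.1 hi).2 (congrFun (LinearMap.mem_ker.1 hv) ⟨i, his⟩)
  refine ⟨v, hvC, fun h => hv0 (by simp [h]), ?_⟩
  rw [Finset.card_compl, hs] at hsupp
  omega

theorem Polynomial.card_le_hammingNorm_eval_add_natDegree {R ι : Type*} [CommRing R]
    [IsDomain R] [DecidableEq R] [Fintype ι] {α : ι → R} (hα : Function.Injective α)
    {p : R[X]} (hp : p ≠ 0) :
    Fintype.card ι ≤ hammingNorm (fun j => p.eval (α j)) + p.natDegree := by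
  let zeros : Finset ι := {j | p.eval (α j) = 0}
  have hzeros : #zeros ≤ p.natDegree := by
    rw [← Finset.card_image_of_injective zeros hα]
    refine card_le_degree_of_subset_roots fun x hx => ?_
    obtain ⟨j, hj, rfl⟩ := Finset.mem_image.1 hx
    exact (mem_roots hp).2 (Finset.mem_filter.1 hj).2
  have hsplit : #zeros + hammingNorm (fun j => p.eval (α j)) = Fintype.card ι :=
    Finset.card_filter_add_card_filter_not _
  omega

section TwistedReedSolomon

variable {F : Type*} [Field F] {k ℓ : ℕ} (hℓ : ℓ < k) (η : F)

noncomputable def twistedPoly : (Fin k → F) →ₗ[F] F[X] where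
  toFun a := (∑ i : Fin k, C (a i) * X ^ (i : ℕ)) + C (η * a ⟨ℓ, hℓ⟩) * X ^ k
  map_add' a b := by
    simp only [Pi.add_apply, C_add, add_mul, mul_add, Finset.sum_add_distrib]
    ring
  map_smul' c a := by
    simp only [Pi.smul_apply, smul_eq_mul, C_mul, RingHom.id_apply, Polynomial.smul_eq_C_mul,
      mul_add, Finset.mul_sum, mul_assoc]
    ring

theorem range_twistedPoly : Set.range (twistedPoly hℓ η) = twistedSpace k ℓ hℓ η := by
  ext f
  exact exists_congr fun a => eq_comm

theorem natDegree_twistedPoly_le (a : Fin k → F) : (twistedPoly hℓ η a).natDegree ≤ k := by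
  refine natDegree_add_le_of_degree_le ?_ (natDegree_C_mul_X_pow_le _ _)
  refine natDegree_sum_le_of_forall_le _ _ fun i _ => ?_
  exact (natDegree_C_mul_X_pow_le _ _).trans i.isLt.le

theorem coeff_twistedPoly_of_lt (a : Fin k → F) {m : ℕ} (hm : m < k) :
    (twistedPoly hℓ η a).coeff m = a ⟨m, hm⟩ := by
  have hcoeff (i : Fin k) :
      (C (a i) * X ^ (i : ℕ)).coeff m = if i = ⟨m, hm⟩ then a i else 0 := by
    simp [Fin.ext_iff, eq_comm]
  simp [twistedPoly, hcoeff, mul_assoc, coeff_C_mul, coeff_X_pow, hm.ne]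

theorem twistedPoly_injective : Function.Injective (twistedPoly hℓ η) := by
  refine (injective_iff_map_eq_zero _).2 fun a ha => funext fun i => ?_
  simpa [ha] using (coeff_twistedPoly_of_lt hℓ η a i.isLt).symm

variable {n : ℕ} (α : Fin n → F)

noncomputable def tgrsEncoder : (Fin k → F) →ₗ[F] (Fin n → F) :=
  (LinearMap.pi fun j => leval (α j)).comp (twistedPoly hℓ η)

theorem range_tgrsEncoder :
    (LinearMap.range (tgrsEncoder hℓ η α) : Set (Fin n → F)) = tgrsCode k ℓ hℓ α η := by
  ext v
  rw [tgrsCode, ← range_twistedPoly]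
  constructor
  · rintro ⟨a, rfl⟩
    exact ⟨_, ⟨a, rfl⟩, fun j => rfl⟩
  · rintro ⟨-, ⟨a, rfl⟩, hv⟩
    exact ⟨a, funext fun j => (hv j).symm⟩

variable {α} [DecidableEq F]

theorem card_le_hammingNorm_tgrsEncoder_add (hα : Function.Injective α) {a : Fin k → F}
    (ha : a ≠ 0) :
    n ≤ hammingNorm (tgrsEncoder hℓ η α a) + k := by
  have hp : twistedPoly hℓ η a ≠ 0 := (map_ne_zero_iff _ (twistedPoly_injective hℓ η)).2 ha
  have := card_le_hammingNorm_eval_add_natDegree hα hp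
  rw [Fintype.card_fin] at this
  exact this.trans (Nat.add_le_add_left (natDegree_twistedPoly_le hℓ η a) _)

theorem card_le_hammingNorm_add_of_mem_tgrsCode (hα : Function.Injective α) {v : Fin n → F}
    (hv : v ∈ tgrsCode k ℓ hℓ α η) (hv0 : v ≠ 0) : n ≤ hammingNorm v + k := by
  rw [← range_tgrsEncoder, SetLike.mem_coe] at hv
  obtain ⟨a, rfl⟩ := hv
  exact card_le_hammingNorm_tgrsEncoder_add hℓ η hα fun ha => hv0 (by rw [ha, map_zero])

theorem tgrsEncoder_injective (hα : Function.Injective α) (hkn : k < n) :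
    Function.Injective (tgrsEncoder hℓ η α) := by
  refine (injective_iff_map_eq_zero _).2 fun a ha => by_contra fun ha0 => ?_
  have := card_le_hammingNorm_tgrsEncoder_add hℓ η hα ha0
  rw [ha, hammingNorm_zero] at this
  omega

end TwistedReedSolomon

theorem tgrs_min_distance_bounds_general {F : Type*} [Field F] [DecidableEq F] {n k ℓ : ℕ}
    (hℓ : ℓ < k) (hkn : k < n)
    (α : Fin n → F) (hα : Function.Injective α) (η : F) :
    ∃ d : ℕ,
      IsLeast {w : ℕ | ∃ v ∈ tgrsCode k ℓ hℓ α η, v ≠ 0 ∧ hammingNorm v = w} d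
        ∧ n - k ≤ d ∧ d ≤ n - k + 1 := by
  set S := {w : ℕ | ∃ v ∈ tgrsCode k ℓ hℓ α η, v ≠ 0 ∧ hammingNorm v = w}
  have hdim := LinearMap.finrank_range_of_inj (tgrsEncoder_injective hℓ η hα hkn)
  rw [finrank_fin_fun] at hdim
  obtain ⟨v, hv, hv0, hv_singleton⟩ :=
    (LinearMap.range (tgrsEncoder hℓ η α)).exists_ne_zero_hammingNorm_add_finrank_le (by omega)
  rw [hdim, Fintype.card_fin] at hv_singleton
  rw [← SetLike.mem_coe, range_tgrsEncoder] at hv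
  have hS : S.Nonempty := ⟨_, v, hv, hv0, rfl⟩
  obtain ⟨w, hw, hw0, hw_min⟩ := Nat.sInf_mem hS
  have hw_lower := card_le_hammingNorm_add_of_mem_tgrsCode hℓ η hα hw hw0
  have hv_min : sInf S ≤ hammingNorm v := Nat.sInf_le ⟨v, hv, hv0, rfl⟩
  exact ⟨sInf S, ⟨Nat.sInf_mem hS, fun _ => Nat.sInf_le⟩, by omega, by omega⟩

/-- The minimum Hamming distance `d` of `C_{k,1,ℓ}(α,1,η)` satisfies
`n - k ≤ d ≤ n - k + 1`: the code is MDS or almost MDS. -/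
theorem tgrs_min_distance_bounds {F : Type*} [Field F] [DecidableEq F] {n k ℓ : ℕ}
    (hℓ : ℓ < k) (hkn : k < n)
    (α : Fin n → F) (hα : Function.Injective α) (η : F) (hη : η ≠ 0) :
    ∃ d : ℕ,
      IsLeast {w : ℕ | ∃ v ∈ tgrsCode k ℓ hℓ α η, v ≠ 0 ∧ hammingNorm v = w} d
        ∧ n - k ≤ d ∧ d ≤ n - k + 1 :=
  tgrs_min_distance_bounds_general hℓ hkn α hα η
end
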